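/- arXiv:math/0703242 — 6 statements merged into one kernel-verified Lean document; each statement's English description precedes it below -/
import Mathlib

section
/- If H_n is a polynomial of degree n that is orthogonal in L²(dμ) to z, z², ..., z^{n-1}, and λ is a zero of H_n, then H_n(z) = C(z − λ)K_{n-1}(z, λ) for some constant C, where K_{n-1}(z, λ) = Σ_{j=0}^{n-1} φ_j(z)·conj(φ_j(λ)) is the reproducing kernel. -/
open MeasureTheory Polynomial

def msupport (μ : Measure ℂ) : Set ℂ := {z | ∀ ε > 0, μ (Metric.ball z ε) ≠ 0}

/-!
Write `H = (z - λ) Q` with `deg Q < n`. On the unit circle `conj (z - λ) = -conj (λ z) (z - λ)`,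
so for `deg R < n - 1` we get `⟨(z - λ) R, Q⟩ = -λ ⟨z R, H⟩ = 0`. Every polynomial of degree `< n`
vanishing at `λ` has this form, hence `P ↦ ⟨P, Q⟩` is a multiple of `P ↦ P(λ)` on polynomials of
degree `< n`. Expanding `Q` in the orthonormal basis `φ₀, …, φₙ₋₁` then gives
`Q = c · K_{n-1}(·, λ)`.
-/

open ComplexConjugate

section DegreeLT

variable {R : Type*} [CommRing R] [IsDomain R]

theorem Polynomial.mem_degreeLT_of_X_sub_C_mul_mem {a : R} {m : ℕ} {q : R[X]}
    (h : (X - C a) * q ∈ degreeLT R (m + 1)) : q ∈ degreeLT R m := by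
  rw [mem_degreeLT, degree_mul, degree_X_sub_C] at h
  rw [mem_degreeLT]
  obtain rfl | hq := eq_or_ne q 0
  · simp
  rw [degree_eq_natDegree hq] at h ⊢
  norm_cast at h ⊢
  omega

theorem LinearMap.apply_eq_eval_mul_apply_one {f : R[X] →ₗ[R] R} {a : R} {m : ℕ}
    (hf : ∀ q ∈ degreeLT R m, f ((X - C a) * q) = 0) {p : R[X]} (hp : p ∈ degreeLT R (m + 1)) :
    f p = p.eval a * f 1 := by
  obtain ⟨q, hq⟩ := X_sub_C_dvd_sub_C_eval (p := p) (a := a)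
  have hconst : C (p.eval a) ∈ degreeLT R (m + 1) :=
    mem_degreeLT.2 (degree_C_le.trans_lt (by exact_mod_cast Nat.succ_pos m))
  have hfq := hf q (mem_degreeLT_of_X_sub_C_mul_mem (hq ▸ Submodule.sub_mem _ hp hconst))
  rw [← hq, map_sub, sub_eq_zero] at hfq
  rw [hfq, ← smul_eq_mul, ← map_smul, smul_eq_C_mul, mul_one]

end DegreeLT

section InnerAgainst

variable {μ : Measure ℂ} [IsFiniteMeasure μ]

theorem integrable_eval_mul_conj_eval (hμ : ∀ᵐ z ∂μ, ‖z‖ = 1) (P R : ℂ[X]) :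
    Integrable (fun z => P.eval z * conj (R.eval z)) μ := by
  have hsphere : ∀ᵐ z ∂μ, z ∈ Metric.sphere (0 : ℂ) 1 := by simpa using hμ
  rw [← Measure.restrict_eq_self_of_ae_mem hsphere]
  exact ContinuousOn.integrableOn_compact (isCompact_sphere 0 1) (by fun_prop)

variable (hμ : ∀ᵐ z ∂μ, ‖z‖ = 1)

noncomputable def innerAgainst (R : ℂ[X]) : ℂ[X] →ₗ[ℂ] ℂ where
  toFun P := ∫ z, P.eval z * conj (R.eval z) ∂μ
  map_add' P P' := by
    simp only [eval_add, add_mul]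
    exact integral_add (integrable_eval_mul_conj_eval hμ P R)
      (integrable_eval_mul_conj_eval hμ P' R)
  map_smul' c P := by
    simp only [eval_smul, smul_eq_mul, mul_assoc, integral_const_mul, RingHom.id_apply]

theorem innerAgainst_apply (R P : ℂ[X]) :
    innerAgainst hμ R P = ∫ z, P.eval z * conj (R.eval z) ∂μ := rfl

theorem conj_innerAgainst (P R : ℂ[X]) : conj (innerAgainst hμ R P) = innerAgainst hμ P R := by
  simp only [innerAgainst_apply, ← integral_conj, map_mul, Complex.conj_conj, mul_comm]

theorem eq_sum_innerAgainst_smul {φ : ℕ → ℂ[X]} (hφdeg : ∀ j, (φ j).natDegree = j)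
    (hφon : ∀ i j, innerAgainst hμ (φ j) (φ i) = if i = j then 1 else 0) {n : ℕ} {P : ℂ[X]}
    (hP : P ∈ degreeLT ℂ n) : P = ∑ j ∈ Finset.range n, innerAgainst hμ (φ j) P • φ j := by
  have hne : ∀ j, φ j ≠ 0 := fun j h => by simpa [h] using hφon j j
  let S : Sequence ℂ := ⟨φ, fun j => by rw [degree_eq_natDegree (hne j), hφdeg]⟩
  rw [← S.span_degreeLT fun i _ => (leadingCoeff_ne_zero.2 (hne i)).isUnit] at hP
  let expand : ℂ[X] →ₗ[ℂ] ℂ[X] := ∑ j ∈ Finset.range n, (innerAgainst hμ (φ j)).smulRight (φ j)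
  have hfix : Set.EqOn expand (LinearMap.id (R := ℂ) (M := ℂ[X])) (S '' Set.Iio n) := by
    rintro _ ⟨i, hi, rfl⟩
    simp_all [S, expand, ite_smul]
  simpa [expand] using (LinearMap.eqOn_span' hfix hP).symm

theorem innerAgainst_X_mul_eq_zero {H : ℂ[X]} {m : ℕ}
    (hH : ∀ k, 1 ≤ k → k ≤ m → ∫ z, H.eval z * conj (z ^ k) ∂μ = 0) {R : ℂ[X]}
    (hR : R ∈ degreeLT ℂ m) : innerAgainst hμ H (X * R) = 0 := by
  classical
  suffices degreeLT ℂ m ≤ LinearMap.ker ((innerAgainst hμ H).comp (LinearMap.mulLeft ℂ X)) from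
    this hR
  rw [degreeLT_eq_span_X_pow, Submodule.span_le, Finset.coe_image, Set.image_subset_iff]
  intro i hi
  replace hi : i < m := by simpa using hi
  rw [Set.mem_preimage, SetLike.mem_coe, LinearMap.mem_ker, LinearMap.comp_apply,
    LinearMap.mulLeft_apply, ← pow_succ', ← conj_innerAgainst, innerAgainst_apply]
  simpa using hH (i + 1) (by omega) hi

theorem innerAgainst_X_sub_C_mul {lam : ℂ} (hlam : ‖lam‖ = 1) (Q R : ℂ[X]) :
    innerAgainst hμ Q ((X - C lam) * R) = -lam * innerAgainst hμ ((X - C lam) * Q) (X * R) := by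
  rw [innerAgainst_apply, innerAgainst_apply, ← integral_const_mul]
  refine integral_congr_ae ?_
  filter_upwards [hμ] with z hz
  have hz' : z * conj z = 1 := by simp [Complex.mul_conj', hz]
  have hlam' : lam * conj lam = 1 := by simp [Complex.mul_conj', hlam]
  simp only [eval_mul, eval_sub, eval_X, eval_C, map_mul, map_sub]
  linear_combination (lam * R.eval z * conj (Q.eval z)) * hz'
    - (z * R.eval z * conj (Q.eval z)) * hlam'

end InnerAgainst

theorem paraorthogonal_kernel_representation_general
    (μ : Measure ℂ) [IsProbabilityMeasure μ]
    (hcirc : ∀ᵐ z ∂μ, ‖z‖ = 1)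
    (φ : ℕ → Polynomial ℂ)
    (hφdeg : ∀ j, (φ j).natDegree = j)
    (hφon : ∀ i j, ∫ z, (φ i).eval z * (starRingEnd ℂ) ((φ j).eval z) ∂μ
      = if i = j then 1 else 0)
    (n : ℕ) (hn : 1 ≤ n)
    (H : Polynomial ℂ) (hHdeg : H.natDegree = n)
    (hHorth : ∀ k, 1 ≤ k → k ≤ n - 1 →
      ∫ z, H.eval z * (starRingEnd ℂ) (z ^ k) ∂μ = 0)
    (lam : ℂ) (hlam : ‖lam‖ = 1) (hroot : H.eval lam = 0) :
    ∃ Cc : ℂ, ∀ z, H.eval z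
      = Cc * (z - lam)
        * ∑ j ∈ Finset.range n, (φ j).eval z * (starRingEnd ℂ) ((φ j).eval lam) := by
  obtain ⟨m, rfl⟩ : ∃ m, n = m + 1 := ⟨n - 1, by omega⟩
  obtain ⟨Q, rfl⟩ := dvd_iff_isRoot.2 hroot
  have hQ : Q ∈ degreeLT ℂ (m + 1) := mem_degreeLT_of_X_sub_C_mul_mem <| mem_degreeLT.2 <|
    degree_le_natDegree.trans_lt (by rw [hHdeg]; exact_mod_cast Nat.lt_succ_self _)
  have hφ : ∀ j < m + 1, φ j ∈ degreeLT ℂ (m + 1) := fun j hj =>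
    mem_degreeLT.2 (degree_le_natDegree.trans_lt (by rw [hφdeg]; exact_mod_cast hj))
  set c := innerAgainst hcirc Q 1
  have hrepr : ∀ P ∈ degreeLT ℂ (m + 1), innerAgainst hcirc Q P = P.eval lam * c :=
    fun P hP => LinearMap.apply_eq_eval_mul_apply_one (fun R hR => by
      rw [innerAgainst_X_sub_C_mul hcirc hlam,
        innerAgainst_X_mul_eq_zero hcirc (by simpa using hHorth) hR, mul_zero]) hP
  refine ⟨conj c, fun z => ?_⟩
  rw [eval_mul, eq_sum_innerAgainst_smul hcirc hφdeg hφon hQ, eval_finsetSum, Finset.mul_sum,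
    Finset.mul_sum]
  refine Finset.sum_congr rfl fun j hj => ?_
  rw [eval_smul, ← conj_innerAgainst, hrepr _ (hφ j (Finset.mem_range.1 hj))]
  simp only [eval_sub, eval_X, eval_C, map_mul, smul_eq_mul]
  ring

/-- If `H` is a degree-`n` polynomial orthogonal in `L²(dμ)` to `z, …, z^{n-1}` and
`lam ∈ ∂𝔻` is a zero of `H`, then `H(z) = C (z - lam) K_{n-1}(z, lam)` where
`K_{n-1}` is the reproducing kernel built from the orthonormal polynomials. -/
theorem paraorthogonal_kernel_representation
    (μ : Measure ℂ) [IsProbabilityMeasure μ]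
    (hcirc : ∀ᵐ z ∂μ, ‖z‖ = 1)
    (hinf : (msupport μ).Infinite)
    (φ : ℕ → Polynomial ℂ)
    (hφdeg : ∀ j, (φ j).natDegree = j)
    (hφon : ∀ i j, ∫ z, (φ i).eval z * (starRingEnd ℂ) ((φ j).eval z) ∂μ
      = if i = j then 1 else 0)
    (n : ℕ) (hn : 1 ≤ n)
    (H : Polynomial ℂ) (hHdeg : H.natDegree = n)
    (hHorth : ∀ k, 1 ≤ k → k ≤ n - 1 →
      ∫ z, H.eval z * (starRingEnd ℂ) (z ^ k) ∂μ = 0)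
    (lam : ℂ) (hlam : ‖lam‖ = 1) (hroot : H.eval lam = 0) :
    ∃ Cc : ℂ, ∀ z, H.eval z
      = Cc * (z - lam)
        * ∑ j ∈ Finset.range n, (φ j).eval z * (starRingEnd ℂ) ((φ j).eval lam) :=
  paraorthogonal_kernel_representation_general μ hcirc φ hφdeg hφon n hn H hHdeg hHorth lam hlam
    hroot
end

section
/- If h is a polynomial of degree at most n−1 such that ⟨zh, z^m⟩ = ⟨λh, z^m⟩ for all 1 ≤ m ≤ n−1 (where λ ∈ ∂𝔻), then ⟨h, z^m⟩ = conj(λ)^m · ⟨h, 1⟩ for all 0 ≤ m ≤ n−1. -/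
/- On the unit circle multiplication by `z` is the adjoint of multiplication by `conj z = z⁻¹`,
so the hypothesis at `m` says `⟨h, z^(m-1)⟩ = λ ⟨h, z^m⟩`; since `conj λ = λ⁻¹`, induction on `m`
gives the claim. -/

open MeasureTheory Polynomial

open ComplexConjugate

theorem Complex.conj_mul_self_of_norm_eq_one {z : ℂ} (hz : ‖z‖ = 1) : conj z * z = 1 := by
  rw [Complex.conj_mul', hz]
  norm_num

theorem integral_mul_mul_conj_pow_succ {μ : Measure ℂ} (hcirc : ∀ᵐ z ∂μ, ‖z‖ = 1)
    (f : ℂ → ℂ) (k : ℕ) :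
    ∫ z, z * f z * conj (z ^ (k + 1)) ∂μ = ∫ z, f z * conj (z ^ k) ∂μ := by
  refine integral_congr_ae ?_
  filter_upwards [hcirc] with z hz
  calc z * f z * conj (z ^ (k + 1)) = f z * conj (z ^ k) * (conj z * z) := by
        rw [map_pow, map_pow]; ring
    _ = f z * conj (z ^ k) := by rw [Complex.conj_mul_self_of_norm_eq_one hz, mul_one]

theorem integral_mul_conj_pow_succ_eq_conj_mul {μ : Measure ℂ} (hcirc : ∀ᵐ z ∂μ, ‖z‖ = 1)
    {f : ℂ → ℂ} {c : ℂ} (hc : ‖c‖ = 1) {k : ℕ}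
    (h : ∫ z, z * f z * conj (z ^ (k + 1)) ∂μ = ∫ z, c * f z * conj (z ^ (k + 1)) ∂μ) :
    ∫ z, f z * conj (z ^ (k + 1)) ∂μ = conj c * ∫ z, f z * conj (z ^ k) ∂μ := by
  rw [← integral_mul_mul_conj_pow_succ hcirc f k, h]
  simp_rw [mul_assoc]
  rw [integral_const_mul, ← mul_assoc, Complex.conj_mul_self_of_norm_eq_one hc, one_mul]

theorem moments_of_quotient_polynomial_general
    (μ : Measure ℂ)
    (hcirc : ∀ᵐ z ∂μ, ‖z‖ = 1)
    (n : ℕ) (h : Polynomial ℂ)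
    (lam : ℂ) (hlam : ‖lam‖ = 1)
    (hyp : ∀ m, 1 ≤ m → m ≤ n - 1 →
      ∫ z, (z * h.eval z) * (starRingEnd ℂ) (z ^ m) ∂μ
        = ∫ z, (lam * h.eval z) * (starRingEnd ℂ) (z ^ m) ∂μ) :
    ∀ m, m ≤ n - 1 →
      ∫ z, h.eval z * (starRingEnd ℂ) (z ^ m) ∂μ
        = (starRingEnd ℂ) lam ^ m * ∫ z, h.eval z * (starRingEnd ℂ) (1 : ℂ) ∂μ := by
  intro m hm
  induction m with
  | zero => simp
  | succ k ih =>
    rw [integral_mul_conj_pow_succ_eq_conj_mul hcirc hlam (hyp (k + 1) k.succ_pos hm),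
      ih (by omega), pow_succ', mul_assoc]

/-- If `h` has degree at most `n-1` and `⟨z·h, z^m⟩ = ⟨lam·h, z^m⟩` for `1 ≤ m ≤ n-1`
(with `lam` on the unit circle), then `⟨h, z^m⟩ = conj(lam)^m ⟨h, 1⟩` for `0 ≤ m ≤ n-1`. -/
theorem moments_of_quotient_polynomial
    (μ : Measure ℂ) [IsProbabilityMeasure μ]
    (hcirc : ∀ᵐ z ∂μ, ‖z‖ = 1)
    (hinf : (msupport μ).Infinite)
    (n : ℕ) (h : Polynomial ℂ) (hdeg : h.natDegree ≤ n - 1)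
    (lam : ℂ) (hlam : ‖lam‖ = 1)
    (hyp : ∀ m, 1 ≤ m → m ≤ n - 1 →
      ∫ z, (z * h.eval z) * (starRingEnd ℂ) (z ^ m) ∂μ
        = ∫ z, (lam * h.eval z) * (starRingEnd ℂ) (z ^ m) ∂μ) :
    ∀ m, m ≤ n - 1 →
      ∫ z, h.eval z * (starRingEnd ℂ) (z ^ m) ∂μ
        = (starRingEnd ℂ) lam ^ m * ∫ z, h.eval z * (starRingEnd ℂ) (1 : ℂ) ∂μ :=
  moments_of_quotient_polynomial_general μ hcirc n h lam hlam hyp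
end

section
/- All zeros of a paraorthogonal polynomial H_n(z, β) = zΦ_{n-1}(z) − conj(β)Φ*_{n-1}(z), with |β| = 1, are simple and lie on the unit circle. -/
/-!
Write `zΦ(z) = ∏ (z - a)` over the zeros of `zΦ` (the zeros of `Φ` together with `0`), so that
`Φ*(z) = ∏ (1 - conj a * z)`. The identity `|1 - conj a z|² - |z - a|² = (1 - |a|²)(1 - |z|²)`
shows that the Blaschke product `B = zΦ / Φ*` has `|B| < 1` inside the disk and `|B| > 1`
outside, so `H = Φ* (B - conj β)` can only vanish on the circle. There the logarithmic
derivative `z B'/B = ∑ (1 - |a|²) / |z - a|²` is positive, so `H' ≠ 0` at every zero of `H`.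
-/

open MeasureTheory Polynomial

open ComplexConjugate

theorem Multiset.prod_map_lt_prod_map_of_nonneg {ι R : Type*} [CommSemiring R] [PartialOrder R]
    [IsStrictOrderedRing R] {s : Multiset ι} (hs : s ≠ 0) (f g : ι → R)
    (h0 : ∀ i ∈ s, 0 ≤ f i) (h : ∀ i ∈ s, f i < g i) :
    (s.map f).prod < (s.map g).prod := by
  obtain ⟨a, ha⟩ := exists_mem_of_ne_zero hs
  obtain ⟨t, rfl⟩ := exists_cons_of_mem ha
  simp only [forall_mem_cons, map_cons, prod_cons] at h0 h ⊢
  rw [mul_comm (f a), mul_comm (g a)]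
  refine mul_lt_mul' (prod_map_le_prod_map₀ f g h0.2 fun i hi => (h.2 i hi).le) h.1 h0.1 ?_
  exact prod_pos fun x hx => by
    obtain ⟨i, hi, rfl⟩ := mem_map.mp hx
    exact (h0.2 i hi).trans_lt (h.2 i hi)

namespace Polynomial

theorem eval_derivative_multiset_prod_map {ι K : Type*} [Field K] (s : Multiset ι)
    (f : ι → K[X]) {z : K} (hz : ∀ i ∈ s, eval z (f i) ≠ 0) :
    eval z (derivative (s.map f).prod) =
      eval z (s.map f).prod * (s.map fun i => eval z (derivative (f i)) / eval z (f i)).sum := by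
  induction s using Multiset.induction_on with
  | empty => simp
  | cons a s ih =>
    simp only [Multiset.forall_mem_cons] at hz
    simp only [Multiset.map_cons, Multiset.prod_cons, Multiset.sum_cons, derivative_mul,
      eval_add, eval_mul, ih hz.2]
    field_simp [hz.1]

theorem reflect_multiset_prod_X_sub_C {R : Type*} [CommRing R] [Nontrivial R] (s : Multiset R) :
    reflect (Multiset.card s) (s.map fun a => X - C a).prod =
      (s.map fun a => 1 - C a * X).prod := by
  induction s using Multiset.induction_on with
  | empty => simp
  | cons a s ih =>
    rw [Multiset.map_cons, Multiset.prod_cons, Multiset.card_cons, add_comm,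
      reflect_mul _ _ (natDegree_X_sub_C_le a) (natDegree_multiset_prod_X_sub_C_eq_card s).le, ih]
    simp [reflect_sub, reflect_C]

theorem eval_derivative_multiset_prod_X_sub_C {K : Type*} [Field K] {s : Multiset K} {z : K}
    (hz : z ∉ s) :
    eval z (derivative (s.map fun a => X - C a).prod) =
      (s.map fun a => z - a).prod * (s.map fun a => (z - a)⁻¹).sum := by
  rw [eval_derivative_multiset_prod_map s _ fun a ha => by
    simpa [sub_eq_zero] using (ne_of_mem_of_not_mem ha hz).symm]
  simp [eval_multiset_prod, Multiset.map_map]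

theorem eval_derivative_multiset_prod_one_sub_C_mul_X {ι K : Type*} [Field K] {s : Multiset ι}
    (c : ι → K) {z : K} (hz : ∀ i ∈ s, 1 - c i * z ≠ 0) :
    eval z (derivative (s.map fun i => 1 - C (c i) * X).prod) =
      (s.map fun i => 1 - c i * z).prod * (s.map fun i => -c i / (1 - c i * z)).sum := by
  rw [eval_derivative_multiset_prod_map s _ fun i hi => by simpa using hz i hi]
  simp [eval_multiset_prod, Multiset.map_map]

end Polynomial

namespace Complex

theorem one_sub_conj_mul_eq_mul_conj_sub {z : ℂ} (hz : ‖z‖ = 1) (a : ℂ) :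
    1 - conj a * z = z * conj (z - a) := by
  have hzz : z * conj z = 1 := by rw [mul_conj, normSq_eq_norm_sq, hz]; simp
  rw [map_sub]
  linear_combination -hzz

theorem norm_one_sub_conj_mul_sq (a z : ℂ) :
    ‖1 - conj a * z‖ ^ 2 = ‖z - a‖ ^ 2 + (1 - ‖a‖ ^ 2) * (1 - ‖z‖ ^ 2) := by
  simp only [← normSq_eq_norm_sq, normSq_apply, sub_re, sub_im, mul_re, mul_im, one_re, one_im,
    conj_re, conj_im]
  ring

theorem norm_sub_lt_norm_one_sub_conj_mul {a z : ℂ} (ha : ‖a‖ < 1) (hz : ‖z‖ < 1) :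
    ‖z - a‖ < ‖1 - conj a * z‖ := by
  rw [← pow_lt_pow_iff_left₀ (norm_nonneg _) (norm_nonneg _) two_ne_zero,
    norm_one_sub_conj_mul_sq, lt_add_iff_pos_right]
  have ha2 : ‖a‖ ^ 2 < 1 := pow_lt_one₀ (norm_nonneg a) ha two_ne_zero
  have hz2 : ‖z‖ ^ 2 < 1 := pow_lt_one₀ (norm_nonneg z) hz two_ne_zero
  exact mul_pos (sub_pos.mpr ha2) (sub_pos.mpr hz2)

theorem norm_one_sub_conj_mul_lt_norm_sub {a z : ℂ} (ha : ‖a‖ < 1) (hz : 1 < ‖z‖) :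
    ‖1 - conj a * z‖ < ‖z - a‖ := by
  rw [← pow_lt_pow_iff_left₀ (norm_nonneg _) (norm_nonneg _) two_ne_zero,
    norm_one_sub_conj_mul_sq, add_lt_iff_neg_left]
  have ha2 : ‖a‖ ^ 2 < 1 := pow_lt_one₀ (norm_nonneg a) ha two_ne_zero
  have hz2 : 1 < ‖z‖ ^ 2 := one_lt_pow₀ hz two_ne_zero
  exact mul_neg_of_pos_of_neg (sub_pos.mpr ha2) (sub_neg.mpr hz2)

theorem div_sub_add_conj_mul_div_one_sub_conj_mul {a z : ℂ} (hz : ‖z‖ = 1) (hza : z ≠ a) :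
    z / (z - a) + conj a * z / (1 - conj a * z) = ((1 - ‖a‖ ^ 2) / ‖z - a‖ ^ 2 : ℝ) := by
  have hz0 : z ≠ 0 := by rintro rfl; simp at hz
  have hza' : z - a ≠ 0 := sub_ne_zero.mpr hza
  have hzz : z * conj z = 1 := by rw [mul_conj, normSq_eq_norm_sq, hz]; simp
  have hzaa : (z - a) * conj (z - a) = (‖z - a‖ ^ 2 : ℝ) := by rw [mul_conj, normSq_eq_norm_sq]
  have haa : a * conj a = (‖a‖ ^ 2 : ℝ) := by rw [mul_conj, normSq_eq_norm_sq]
  rw [one_sub_conj_mul_eq_mul_conj_sub hz, mul_comm (conj a) z, mul_div_mul_left _ _ hz0,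
    div_add_div _ _ hza' ((_root_.map_ne_zero _).mpr hza'), hzaa, ofReal_div]
  congr 1
  push_cast at haa ⊢
  rw [map_sub] at *
  linear_combination hzz - haa

end Complex

-- `P - γ P*` for `P = ∏ (X - a)`, where `P*(z) = zᵐ conj (P (1 / conj z))` with `m = card s`.
noncomputable def paraorthogonalPoly (s : Multiset ℂ) (γ : ℂ) : ℂ[X] :=
  (s.map fun a => X - C a).prod - C γ * (s.map fun a => 1 - C (conj a) * X).prod

section paraorthogonalPoly

variable {s : Multiset ℂ} {γ z : ℂ}

theorem eval_paraorthogonalPoly :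
    eval z (paraorthogonalPoly s γ) =
      (s.map fun a => z - a).prod - γ * (s.map fun a => 1 - conj a * z).prod := by
  simp [paraorthogonalPoly, eval_multiset_prod, Multiset.map_map]

theorem isRoot_paraorthogonalPoly_iff :
    (paraorthogonalPoly s γ).IsRoot z ↔
      (s.map fun a => z - a).prod = γ * (s.map fun a => 1 - conj a * z).prod := by
  rw [IsRoot.def, eval_paraorthogonalPoly, sub_eq_zero]

theorem norm_eq_one_of_isRoot_paraorthogonalPoly (hs : s ≠ 0) (hdisk : ∀ a ∈ s, ‖a‖ < 1)
    (hγ : ‖γ‖ = 1) (hz : (paraorthogonalPoly s γ).IsRoot z) : ‖z‖ = 1 := by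
  have hnorm : (s.map fun a => ‖z - a‖).prod = (s.map fun a => ‖1 - conj a * z‖).prod := by
    have h := congrArg (‖·‖) (isRoot_paraorthogonalPoly_iff.mp hz)
    rw [norm_mul, hγ, one_mul] at h
    simpa [← normHom_apply, map_multiset_prod, Multiset.map_map, Function.comp_def] using h
  rcases lt_trichotomy ‖z‖ 1 with hlt | heq | hgt
  · exact absurd hnorm (Multiset.prod_map_lt_prod_map_of_nonneg hs _ _ (fun _ _ => norm_nonneg _)
      fun a ha => Complex.norm_sub_lt_norm_one_sub_conj_mul (hdisk a ha) hlt).ne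
  · exact heq
  · exact absurd hnorm (Multiset.prod_map_lt_prod_map_of_nonneg hs _ _ (fun _ _ => norm_nonneg _)
      fun a ha => Complex.norm_one_sub_conj_mul_lt_norm_sub (hdisk a ha) hgt).ne'

theorem mul_eval_derivative_paraorthogonalPoly (hdisk : ∀ a ∈ s, ‖a‖ < 1)
    (hz : (paraorthogonalPoly s γ).IsRoot z) (hz1 : ‖z‖ = 1) :
    z * eval z (derivative (paraorthogonalPoly s γ)) =
      (s.map fun a => z - a).prod * ((s.map fun a => (1 - ‖a‖ ^ 2) / ‖z - a‖ ^ 2).sum : ℝ) := by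
  have hza : ∀ a ∈ s, z ≠ a := fun a ha h => by linarith [hdisk a ha, h ▸ hz1]
  have hza' : ∀ a ∈ s, 1 - conj a * z ≠ 0 := fun a ha => by
    rw [Complex.one_sub_conj_mul_eq_mul_conj_sub hz1]
    exact mul_ne_zero (by rintro rfl; simp at hz1)
      ((_root_.map_ne_zero _).mpr (sub_ne_zero.mpr (hza a ha)))
  have hsum : (((s.map fun a => (1 - ‖a‖ ^ 2) / ‖z - a‖ ^ 2).sum : ℝ) : ℂ) =
      (s.map fun a => z / (z - a) + conj a * z / (1 - conj a * z)).sum := by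
    rw [← Complex.ofRealHom_eq_coe, map_multiset_sum, Multiset.map_map]
    exact congrArg Multiset.sum (Multiset.map_congr rfl fun a ha =>
      (Complex.div_sub_add_conj_mul_div_one_sub_conj_mul hz1 (hza a ha)).symm)
  have hsum₁ : (s.map fun a => z / (z - a)).sum = z * (s.map fun a => (z - a)⁻¹).sum := by
    simp only [← Multiset.sum_map_mul_left, div_eq_mul_inv]
  have hsum₂ : (s.map fun a => conj a * z / (1 - conj a * z)).sum =
      -z * (s.map fun a => -conj a / (1 - conj a * z)).sum := by
    rw [← Multiset.sum_map_mul_left]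
    exact congrArg Multiset.sum (Multiset.map_congr rfl fun a _ => by ring)
  rw [isRoot_paraorthogonalPoly_iff] at hz
  rw [paraorthogonalPoly, derivative_sub, derivative_C_mul, eval_sub, eval_mul, eval_C,
    eval_derivative_multiset_prod_X_sub_C fun ha => hza z ha rfl,
    eval_derivative_multiset_prod_one_sub_C_mul_X _ hza', hsum, Multiset.sum_map_add, hsum₁,
    hsum₂, hz]
  ring

theorem eval_derivative_paraorthogonalPoly_ne_zero (hs : s ≠ 0) (hdisk : ∀ a ∈ s, ‖a‖ < 1)
    (hz : (paraorthogonalPoly s γ).IsRoot z) (hz1 : ‖z‖ = 1) :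
    eval z (derivative (paraorthogonalPoly s γ)) ≠ 0 := by
  have hza : ∀ a ∈ s, z ≠ a := fun a ha h => by linarith [hdisk a ha, h ▸ hz1]
  have hprod : (s.map fun a => z - a).prod ≠ 0 := Multiset.prod_ne_zero fun h => by
    obtain ⟨a, ha, h⟩ := Multiset.mem_map.mp h
    exact hza a ha (sub_eq_zero.mp h)
  have hpos : 0 < (s.map fun a => (1 - ‖a‖ ^ 2) / ‖z - a‖ ^ 2).sum := by
    simpa using Multiset.sum_lt_sum_of_nonempty (f := fun _ => (0 : ℝ)) hs fun a ha =>
      div_pos (sub_pos.mpr (pow_lt_one₀ (norm_nonneg a) (hdisk a ha) two_ne_zero))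
        (pow_pos (norm_pos_iff.mpr (sub_ne_zero.mpr (hza a ha))) 2)
  intro h
  have := mul_eval_derivative_paraorthogonalPoly hdisk hz hz1
  rw [h, mul_zero, eq_comm] at this
  exact mul_ne_zero hprod (Complex.ofReal_ne_zero.mpr hpos.ne') this

theorem rootMultiplicity_paraorthogonalPoly_eq_one (hs : s ≠ 0) (hdisk : ∀ a ∈ s, ‖a‖ < 1)
    (hγ : ‖γ‖ = 1) (hz : (paraorthogonalPoly s γ).IsRoot z) :
    rootMultiplicity z (paraorthogonalPoly s γ) = 1 := by
  have hne : paraorthogonalPoly s γ ≠ 0 := fun h => by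
    simpa using norm_eq_one_of_isRoot_paraorthogonalPoly hs hdisk hγ (z := 0) (by simp [h])
  have hderiv := eval_derivative_paraorthogonalPoly_ne_zero hs hdisk hz
    (norm_eq_one_of_isRoot_paraorthogonalPoly hs hdisk hγ hz)
  have h1 := (rootMultiplicity_pos hne).mpr hz
  have h2 := mt (one_lt_rootMultiplicity_iff_isRoot hne).mp fun h => hderiv h.2
  omega

theorem X_mul_sub_C_mul_reflect_map_conj_eq_paraorthogonalPoly {Φ : ℂ[X]} (hΦ : Φ.Monic)
    (γ : ℂ) :
    X * Φ - C γ * reflect Φ.natDegree (Φ.map conj) =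
      paraorthogonalPoly (0 ::ₘ Φ.roots) γ := by
  have hsplit := (IsAlgClosed.splits Φ).eq_prod_roots_of_monic hΦ
  rw [← splits_iff_card_roots.mp (IsAlgClosed.splits Φ)]
  generalize Φ.roots = s at hsplit ⊢
  subst hsplit
  have := reflect_multiset_prod_X_sub_C (s.map conj)
  simp only [Polynomial.map_multiset_prod, Multiset.map_map, Function.comp_def,
    Polynomial.map_sub, map_X, map_C, Multiset.card_map] at this ⊢
  rw [this]
  simp [paraorthogonalPoly]

end paraorthogonalPoly

theorem paraorthogonal_zeros_simple_on_circle_general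
    (n : ℕ)
    (Φ : Polynomial ℂ) (hΦmonic : Φ.Monic) (hΦdeg : Φ.natDegree = n - 1)
    (hΦroots : ∀ z, Φ.IsRoot z → ‖z‖ < 1)
    (β : ℂ) (hβ : ‖β‖ = 1) :
    ∀ z, (X * Φ - C ((starRingEnd ℂ) β) * reflect (n - 1) (Φ.map (starRingEnd ℂ))).IsRoot z →
      ‖z‖ = 1 ∧
      (X * Φ - C ((starRingEnd ℂ) β)
        * reflect (n - 1) (Φ.map (starRingEnd ℂ))).rootMultiplicity z = 1 := by
  rw [← hΦdeg, X_mul_sub_C_mul_reflect_map_conj_eq_paraorthogonalPoly hΦmonic]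
  have hdisk : ∀ a ∈ 0 ::ₘ Φ.roots, ‖a‖ < 1 := by
    simp only [Multiset.forall_mem_cons, norm_zero, zero_lt_one, true_and]
    exact fun a ha => hΦroots a (isRoot_of_mem_roots ha)
  have hγ : ‖conj β‖ = 1 := by rwa [Complex.norm_conj]
  intro z hz
  exact ⟨norm_eq_one_of_isRoot_paraorthogonalPoly Multiset.cons_ne_zero hdisk hγ hz,
    rootMultiplicity_paraorthogonalPoly_eq_one Multiset.cons_ne_zero hdisk hγ hz⟩

/-- All zeros of the paraorthogonal polynomial
`H_n(z,β) = zΦ_{n-1}(z) - conj(β)Φ*_{n-1}(z)` (with `|β| = 1`, and `Φ_{n-1}` the monic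
orthogonal polynomial, all of whose zeros lie strictly inside the unit disk) are simple
and lie on the unit circle. -/
theorem paraorthogonal_zeros_simple_on_circle
    (μ : Measure ℂ) [IsProbabilityMeasure μ]
    (hcirc : ∀ᵐ z ∂μ, ‖z‖ = 1)
    (hinf : (msupport μ).Infinite)
    (n : ℕ) (hn : 1 ≤ n)
    (Φ : Polynomial ℂ) (hΦmonic : Φ.Monic) (hΦdeg : Φ.natDegree = n - 1)
    (hΦorth : ∀ k, k < n - 1 → ∫ z, Φ.eval z * (starRingEnd ℂ) (z ^ k) ∂μ = 0)
    (hΦroots : ∀ z, Φ.IsRoot z → ‖z‖ < 1)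
    (β : ℂ) (hβ : ‖β‖ = 1) :
    ∀ z, (X * Φ - C ((starRingEnd ℂ) β) * reflect (n - 1) (Φ.map (starRingEnd ℂ))).IsRoot z →
      ‖z‖ = 1 ∧
      (X * Φ - C ((starRingEnd ℂ) β)
        * reflect (n - 1) (Φ.map (starRingEnd ℂ))).rootMultiplicity z = 1 :=
  paraorthogonal_zeros_simple_on_circle_general n Φ hΦmonic hΦdeg hΦroots β hβ
end

section
/- Let z₀ ∈ ∂𝔻 with δ = dist(z₀, supp μ) > 0 and let λ ∈ ∂𝔻, z₀ ≠ λ. If |h_{n+1}(z₀)| ≤ |h_n(z₀)|, then |h_n(z₀)| / K_{n-1}(z₀, z₀)^{1/2} ≥ (1/4)|φ_n(λ)|·|z₀ − λ|·δ. -/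
/-
On the unit circle the kernel `k(z) = K_{n-1}(z, z₀)` satisfies the Christoffel–Darboux identity
`(1 - conj z₀ z) k = conj φ*_n(z₀) φ*_n - conj φ_n(z₀) φ_n`: indeed `zφ_0, …, zφ_{n-1}, φ*_n` is a
second orthonormal basis of the polynomials of degree `≤ n`, and the kernel does not depend on the
choice of orthonormal basis. On `supp μ` the factor `|1 - conj z₀ z| = |z - z₀|` is at least `δ`,
while `|φ*_n| = |φ_n|` on the circle, so taking `L²(μ)` norms gives
`δ² K_{n-1}(z₀, z₀) ≤ 4 |φ_n(z₀)|²`. Finally `h_{n+1}(z₀) - h_n(z₀) = (1 - conj λ z₀) φ_n(z₀) conj φ_n(λ)`,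
so the hypothesis `|h_{n+1}(z₀)| ≤ |h_n(z₀)|` gives `|z₀ - λ| |φ_n(z₀)| |φ_n(λ)| ≤ 2 |h_n(z₀)|`.
-/

open MeasureTheory Polynomial

open ComplexConjugate Finset

lemma mul_conj_eq_one_of_norm_eq_one {z : ℂ} (hz : ‖z‖ = 1) : z * conj z = 1 := by
  rw [Complex.mul_conj', hz]; norm_num

lemma norm_one_sub_conj_mul {w : ℂ} (hw : ‖w‖ = 1) (z : ℂ) : ‖1 - conj w * z‖ = ‖z - w‖ := by
  have : 1 - conj w * z = conj w * (w - z) := by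
    linear_combination (mul_conj_eq_one_of_norm_eq_one hw).symm
  rw [this, norm_mul, Complex.norm_conj, hw, one_mul, norm_sub_rev]

/-- The reversed polynomial `φ*_n(z) = zⁿ conj (φ_n (1 / conj z))`. -/
noncomputable def reversedPoly (n : ℕ) (p : ℂ[X]) : ℂ[X] := (p.map (starRingEnd ℂ)).reflect n

lemma natDegree_reversedPoly_le {n : ℕ} {p : ℂ[X]} (hp : p.natDegree ≤ n) :
    (reversedPoly n p).natDegree ≤ n :=
  natDegree_reflect_le.trans (max_le le_rfl (natDegree_map_le.trans hp))

lemma eval_reversedPoly {n : ℕ} {p : ℂ[X]} (hp : p.natDegree ≤ n) {z : ℂ} (hz : ‖z‖ = 1) :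
    (reversedPoly n p).eval z = z ^ n * conj (p.eval z) := by
  have hzc := mul_conj_eq_one_of_norm_eq_one hz
  let : Invertible (conj z) := ⟨z, hzc, by rw [mul_comm, hzc]⟩
  have h := eval₂_reflect_mul_pow (RingHom.id ℂ) (conj z) n (p.map (starRingEnd ℂ))
    (natDegree_map_le.trans hp)
  rw [eval₂_map, RingHom.id_comp, eval₂_at_apply] at h
  change (reversedPoly n p).eval z * conj z ^ n = _ at h
  have hpow : z ^ n * conj z ^ n = 1 := by rw [← mul_pow, hzc, one_pow]
  linear_combination z ^ n * h - (reversedPoly n p).eval z * hpow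

lemma norm_eval_reversedPoly {n : ℕ} {p : ℂ[X]} (hp : p.natDegree ≤ n) {z : ℂ} (hz : ‖z‖ = 1) :
    ‖(reversedPoly n p).eval z‖ = ‖p.eval z‖ := by
  rw [eval_reversedPoly hp hz, norm_mul, norm_pow, hz, one_pow, one_mul, Complex.norm_conj]

noncomputable def polyInner (μ : Measure ℂ) (p q : ℂ[X]) : ℂ := ∫ z, p.eval z * conj (q.eval z) ∂μ

lemma polyInner_conj_symm (μ : Measure ℂ) (p q : ℂ[X]) :
    polyInner μ p q = conj (polyInner μ q p) := by
  rw [polyInner, polyInner, ← integral_conj]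
  simp_rw [map_mul, Complex.conj_conj, mul_comm]

lemma polyInner_smul_left (μ : Measure ℂ) (a : ℂ) (p q : ℂ[X]) :
    polyInner μ (a • p) q = a * polyInner μ p q := by
  simp_rw [polyInner, eval_smul, smul_eq_mul, mul_assoc, integral_const_mul]

lemma polyInner_self (μ : Measure ℂ) (p : ℂ[X]) :
    polyInner μ p p = ((∫ z, ‖p.eval z‖ ^ 2 ∂μ : ℝ) : ℂ) := by
  rw [polyInner, ← integral_complex_ofReal]
  simp_rw [Complex.mul_conj', Complex.ofReal_pow]

section UnitCircle

variable {μ : Measure ℂ} (hcirc : ∀ᵐ z ∂μ, ‖z‖ = 1)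
include hcirc

lemma polyInner_X_mul_X_mul (p q : ℂ[X]) :
    polyInner μ (X * p) (X * q) = polyInner μ p q := by
  refine integral_congr_ae ?_
  filter_upwards [hcirc] with z hz
  simp only [eval_mul, eval_X, map_mul]
  linear_combination (p.eval z * conj (q.eval z)) * mul_conj_eq_one_of_norm_eq_one hz

lemma polyInner_reversedPoly_self {n : ℕ} {p : ℂ[X]} (hp : p.natDegree ≤ n) :
    polyInner μ (reversedPoly n p) (reversedPoly n p) = polyInner μ p p := by
  refine integral_congr_ae ?_
  filter_upwards [hcirc] with z hz
  simp only [Complex.mul_conj', norm_eval_reversedPoly hp hz]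

variable [IsFiniteMeasure μ]

lemma integrable_of_continuous_of_ae_norm_eq_one {E : Type*} [NormedAddCommGroup E]
    {f : ℂ → E} (hf : Continuous f) : Integrable f μ := by
  obtain ⟨C, hC⟩ := (isCompact_sphere (0 : ℂ) 1).exists_bound_of_continuousOn hf.continuousOn
  refine (integrable_const C).mono' hf.aestronglyMeasurable ?_
  filter_upwards [hcirc] with z hz
  exact hC z (by simpa using hz)

lemma polyInner_add_left (p q r : ℂ[X]) :
    polyInner μ (p + q) r = polyInner μ p r + polyInner μ q r := by
  simp_rw [polyInner, eval_add, add_mul]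
  exact integral_add (integrable_of_continuous_of_ae_norm_eq_one hcirc (by fun_prop))
    (integrable_of_continuous_of_ae_norm_eq_one hcirc (by fun_prop))

lemma polyInner_sum_smul_left (s : Finset ℕ) (a : ℕ → ℂ) (p : ℕ → ℂ[X]) (q : ℂ[X]) :
    polyInner μ (∑ j ∈ s, a j • p j) q = ∑ j ∈ s, a j * polyInner μ (p j) q := by
  induction s using Finset.induction_on with
  | empty => simp [polyInner]
  | insert j s hj ih =>
    rw [sum_insert hj, sum_insert hj, polyInner_add_left hcirc, polyInner_smul_left, ih]

end UnitCircle

/-- `kernelPoly φ N w` is the paper's `K_{N-1}(·, w)`: the index is shifted by one. -/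
noncomputable def kernelPoly (e : ℕ → ℂ[X]) (N : ℕ) (w : ℂ) : ℂ[X] :=
  ∑ j ∈ range N, conj ((e j).eval w) • e j

lemma sum_conj_mul_eq_ite_of_sum_mul_conj {N : ℕ} {u : ℕ → ℕ → ℂ}
    (hrow : ∀ i < N, ∀ k < N, ∑ j ∈ range N, u i j * conj (u k j) = if i = k then 1 else 0) :
    ∀ j < N, ∀ l < N, ∑ i ∈ range N, conj (u i j) * u i l = if j = l then 1 else 0 := by
  let U : Matrix (Fin N) (Fin N) ℂ := .of fun i j => u i j
  have hU : U * star U = 1 := by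
    ext i k
    simpa [U, Matrix.mul_apply, Matrix.one_apply, Fin.val_inj, Fin.sum_univ_eq_sum_range
      (fun j => u i j * conj (u k j))] using hrow i i.isLt k k.isLt
  intro j hj l hl
  have hU' : star U * U = 1 := mul_eq_one_comm.1 hU
  have := congrFun (congrFun hU' ⟨j, hj⟩) ⟨l, hl⟩
  simpa [U, Matrix.mul_apply, Matrix.one_apply, Fin.sum_univ_eq_sum_range
      (fun i => conj (u i j) * u i l)] using this

lemma kernelPoly_unitary_sum_smul {N : ℕ} {u : ℕ → ℕ → ℂ}
    (hcol : ∀ j < N, ∀ l < N, ∑ i ∈ range N, conj (u i j) * u i l = if j = l then 1 else 0)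
    (e : ℕ → ℂ[X]) (w : ℂ) :
    kernelPoly (fun i => ∑ j ∈ range N, u i j • e j) N w = kernelPoly e N w := by
  simp only [kernelPoly, eval_finsetSum, eval_smul, smul_eq_mul, map_sum, map_mul, smul_sum,
    smul_smul]
  rw [sum_comm]
  refine sum_congr rfl fun j hj => ?_
  rw [← sum_smul]
  congr 1
  calc ∑ i ∈ range N, (∑ l ∈ range N, conj (u i l) * conj ((e l).eval w)) * u i j
      = ∑ l ∈ range N, conj ((e l).eval w) * ∑ i ∈ range N, conj (u i l) * u i j := by
        simp_rw [sum_mul, mul_sum]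
        rw [sum_comm]
        exact sum_congr rfl fun _ _ => sum_congr rfl fun _ _ => by ring
    _ = conj ((e j).eval w) := by
        rw [sum_congr rfl fun l hl => by rw [hcol l (mem_range.1 hl) j (mem_range.1 hj)]]
        simp [hj]

section Orthonormal

variable {μ : Measure ℂ} {φ : ℕ → ℂ[X]}
  (hφon : ∀ i j, polyInner μ (φ i) (φ j) = if i = j then 1 else 0)
include hφon

lemma ne_zero_of_orthonormal (j : ℕ) : φ j ≠ 0 := by
  intro h
  simpa [h, polyInner] using hφon j j

lemma sum_mul_polyInner_orthonormal (a : ℕ → ℂ) {s : Finset ℕ} {k : ℕ} (hk : k ∈ s) :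
    ∑ j ∈ s, a j * polyInner μ (φ j) (φ k) = a k := by
  simp [hφon, hk]

variable [IsFiniteMeasure μ] (hcirc : ∀ᵐ z ∂μ, ‖z‖ = 1)
include hcirc

lemma polyInner_kernelPoly_left {N j : ℕ} (hj : j < N) (w : ℂ) :
    polyInner μ (kernelPoly φ N w) (φ j) = conj ((φ j).eval w) := by
  rw [kernelPoly, polyInner_sum_smul_left hcirc,
    sum_mul_polyInner_orthonormal hφon _ (mem_range.2 hj)]

lemma polyInner_kernelPoly_self (N : ℕ) (w : ℂ) :
    polyInner μ (kernelPoly φ N w) (kernelPoly φ N w)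
      = ((∑ j ∈ range N, ‖(φ j).eval w‖ ^ 2 : ℝ) : ℂ) := by
  conv_lhs => arg 2; rw [kernelPoly]
  rw [polyInner_sum_smul_left hcirc]
  push_cast
  refine sum_congr rfl fun j hj => ?_
  rw [polyInner_conj_symm, polyInner_kernelPoly_left hφon hcirc (mem_range.1 hj),
    Complex.conj_conj, Complex.conj_mul']

variable (hφdeg : ∀ j, (φ j).natDegree = j)
include hφdeg

lemma sum_polyInner_smul_eq {m : ℕ} {p : ℂ[X]} (hp : p.natDegree ≤ m) :
    ∑ j ∈ range (m + 1), polyInner μ p (φ j) • φ j = p := by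
  let S : Sequence ℂ := ⟨φ, fun j => by
    rw [degree_eq_natDegree (ne_zero_of_orthonormal hφon j), hφdeg]⟩
  have hspan : p ∈ Submodule.span ℂ (φ '' Set.Iic m) := by
    rw [show φ = ⇑S from rfl, S.span_degreeLE fun i _ =>
      (leadingCoeff_ne_zero.2 (ne_zero_of_orthonormal hφon i)).isUnit]
    exact mem_degreeLE.2 (degree_le_of_natDegree_le hp)
  clear hp
  induction hspan using Submodule.span_induction with
  | mem x hx =>
    obtain ⟨i, hi, rfl⟩ := hx
    simp [hφon, Nat.lt_succ_iff.2 hi]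
  | zero => simp [polyInner]
  | add x y _ _ hx hy =>
    simp_rw [polyInner_add_left hcirc, add_smul, sum_add_distrib, hx, hy]
  | smul a x _ hx =>
    simp_rw [polyInner_smul_left, mul_smul, ← smul_sum, hx]

lemma polyInner_eq_sum_mul_conj {m : ℕ} {p : ℂ[X]} (hp : p.natDegree ≤ m) (q : ℂ[X]) :
    polyInner μ p q = ∑ j ∈ range (m + 1), polyInner μ p (φ j) * conj (polyInner μ q (φ j)) := by
  conv_lhs => rw [← sum_polyInner_smul_eq hφon hcirc hφdeg hp]
  simp_rw [polyInner_sum_smul_left hcirc, ← polyInner_conj_symm]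

lemma polyInner_eq_zero_of_natDegree_lt {n : ℕ} {p : ℂ[X]} (hp : p.natDegree < n) :
    polyInner μ (φ n) p = 0 := by
  rw [polyInner_conj_symm, polyInner_eq_sum_mul_conj hφon hcirc hφdeg (m := n - 1) (by omega),
    sum_eq_zero fun j hj => ?_, map_zero]
  rw [hφon, if_neg (by simp at hj; omega), map_zero, mul_zero]

lemma kernelPoly_eq_of_orthonormal {n : ℕ} {f : ℕ → ℂ[X]}
    (hfdeg : ∀ i ≤ n, (f i).natDegree ≤ n)
    (hfon : ∀ i ≤ n, ∀ k ≤ n, polyInner μ (f i) (f k) = if i = k then 1 else 0) (w : ℂ) :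
    kernelPoly f (n + 1) w = kernelPoly φ (n + 1) w := by
  calc kernelPoly f (n + 1) w
      = kernelPoly (fun i => ∑ j ∈ range (n + 1), polyInner μ (f i) (φ j) • φ j) (n + 1) w :=
        sum_congr rfl fun i hi => by
          dsimp only
          rw [sum_polyInner_smul_eq hφon hcirc hφdeg (hfdeg i (Nat.lt_succ_iff.1 (mem_range.1 hi)))]
    _ = kernelPoly φ (n + 1) w :=
        kernelPoly_unitary_sum_smul (sum_conj_mul_eq_ite_of_sum_mul_conj fun i hi k hk => ?_) φ w
  rw [← polyInner_eq_sum_mul_conj hφon hcirc hφdeg (hfdeg i (Nat.lt_succ_iff.1 hi)),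
    hfon i (Nat.lt_succ_iff.1 hi) k (Nat.lt_succ_iff.1 hk)]

lemma polyInner_X_mul_reversedPoly {j n : ℕ} (hj : j < n) :
    polyInner μ (X * φ j) (reversedPoly n (φ n)) = 0 := by
  obtain ⟨m, rfl⟩ := Nat.exists_eq_add_of_lt hj
  calc polyInner μ (X * φ j) (reversedPoly (j + m + 1) (φ (j + m + 1)))
      = polyInner μ (φ (j + m + 1)) (X ^ m * reversedPoly j (φ j)) := by
        refine integral_congr_ae ?_
        filter_upwards [hcirc] with z hz
        simp only [eval_mul, eval_X, eval_pow, map_mul, map_pow, Complex.conj_conj,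
          eval_reversedPoly (hφdeg _).le hz]
        linear_combination (φ j).eval z * (φ (j + m + 1)).eval z * conj z ^ (j + m)
          * mul_conj_eq_one_of_norm_eq_one hz
    _ = 0 := by
        refine polyInner_eq_zero_of_natDegree_lt hφon hcirc hφdeg (natDegree_mul_le.trans_lt ?_)
        rw [natDegree_X_pow]
        have := natDegree_reversedPoly_le (hφdeg j).le
        omega

theorem christoffel_darboux (n : ℕ) (w : ℂ) :
    (1 - C (conj w) * X) * kernelPoly φ n w
      = conj ((reversedPoly n (φ n)).eval w) • reversedPoly n (φ n) - conj ((φ n).eval w) • φ n := by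
  let f i := if i < n then X * φ i else reversedPoly n (φ n)
  have hfdeg : ∀ i ≤ n, (f i).natDegree ≤ n := by
    intro i hi
    rcases hi.lt_or_eq with hi | rfl
    · simp only [f, if_pos hi]
      exact natDegree_mul_le.trans (by rw [natDegree_X, hφdeg]; omega)
    · simpa [f] using natDegree_reversedPoly_le (hφdeg i).le
  have hfon : ∀ i ≤ n, ∀ k ≤ n, polyInner μ (f i) (f k) = if i = k then 1 else 0 := by
    intro i hi k hk
    rcases hi.lt_or_eq with hi | rfl <;> rcases hk.lt_or_eq with hk | rfl
    · simp only [f, if_pos hi, if_pos hk, polyInner_X_mul_X_mul hcirc, hφon]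
    · simp only [f, if_pos hi, lt_irrefl, if_false, if_neg hi.ne,
        polyInner_X_mul_reversedPoly hφon hcirc hφdeg hi]
    · simp only [f, if_pos hk, lt_irrefl, if_false, if_neg hk.ne']
      rw [polyInner_conj_symm, polyInner_X_mul_reversedPoly hφon hcirc hφdeg hk, map_zero]
    · simp only [f, lt_irrefl, if_false, if_true,
        polyInner_reversedPoly_self hcirc (hφdeg _).le, hφon]
  have h := kernelPoly_eq_of_orthonormal hφon hcirc hφdeg hfdeg hfon w
  rw [kernelPoly, sum_range_succ, kernelPoly, sum_range_succ,
    sum_congr rfl fun i hi => by rw [show f i = X * φ i from if_pos (mem_range.1 hi)],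
    show f n = reversedPoly n (φ n) from if_neg (lt_irrefl n)] at h
  have hXK : ∑ i ∈ range n, conj ((X * φ i).eval w) • (X * φ i)
      = C (conj w) * X * kernelPoly φ n w := by
    simp only [kernelPoly, mul_sum, eval_mul, eval_X, map_mul, smul_eq_C_mul]
    exact sum_congr rfl fun _ _ => by ring
  rw [hXK] at h
  change _ = kernelPoly φ n w + _ at h
  linear_combination -h

lemma infDist_sq_mul_norm_sq_eval_kernelPoly_le {S : Set ℂ} {z₀ z : ℂ} (hz₀ : ‖z₀‖ = 1)
    (hz : ‖z‖ = 1) (hzS : z ∈ S) (n : ℕ) :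
    Metric.infDist z₀ S ^ 2 * ‖(kernelPoly φ n z₀).eval z‖ ^ 2
      ≤ 4 * ‖(φ n).eval z₀‖ ^ 2 * ‖(φ n).eval z‖ ^ 2 := by
  have hδ : Metric.infDist z₀ S ≤ ‖1 - conj z₀ * z‖ := by
    rw [norm_one_sub_conj_mul hz₀, ← dist_eq_norm, dist_comm]
    exact Metric.infDist_le_dist_of_mem hzS
  have hcd := congrArg (eval z) (christoffel_darboux hφon hcirc hφdeg n z₀)
  simp only [eval_mul, eval_sub, eval_one, eval_C, eval_X, eval_smul, smul_eq_mul] at hcd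
  set x := conj ((reversedPoly n (φ n)).eval z₀) * (reversedPoly n (φ n)).eval z
  set y := conj ((φ n).eval z₀) * (φ n).eval z
  have hx : ‖x‖ = ‖(φ n).eval z₀‖ * ‖(φ n).eval z‖ := by
    simp only [x, norm_mul, Complex.norm_conj, norm_eval_reversedPoly (hφdeg n).le hz,
      norm_eval_reversedPoly (hφdeg n).le hz₀]
  have hy : ‖y‖ = ‖(φ n).eval z₀‖ * ‖(φ n).eval z‖ := by
    simp only [y, norm_mul, Complex.norm_conj]
  calc Metric.infDist z₀ S ^ 2 * ‖(kernelPoly φ n z₀).eval z‖ ^ 2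
      ≤ ‖(1 - conj z₀ * z) * (kernelPoly φ n z₀).eval z‖ ^ 2 := by
        rw [norm_mul, mul_pow]
        gcongr
        exact Metric.infDist_nonneg
    _ = ‖x - y‖ ^ 2 := by rw [hcd]
    _ ≤ (‖x‖ + ‖y‖) ^ 2 := by gcongr; exact norm_sub_le x y
    _ = 4 * ‖(φ n).eval z₀‖ ^ 2 * ‖(φ n).eval z‖ ^ 2 := by rw [hx, hy]; ring

theorem infDist_sq_mul_sum_norm_sq_le {S : Set ℂ} (hS : ∀ᵐ z ∂μ, z ∈ S) {z₀ : ℂ}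
    (hz₀ : ‖z₀‖ = 1) (n : ℕ) :
    Metric.infDist z₀ S ^ 2 * ∑ j ∈ range n, ‖(φ j).eval z₀‖ ^ 2
      ≤ 4 * ‖(φ n).eval z₀‖ ^ 2 := by
  have hk : ∫ z, ‖(kernelPoly φ n z₀).eval z‖ ^ 2 ∂μ = ∑ j ∈ range n, ‖(φ j).eval z₀‖ ^ 2 := by
    exact_mod_cast (polyInner_self μ _).symm.trans (polyInner_kernelPoly_self hφon hcirc n z₀)
  have hφn : ∫ z, ‖(φ n).eval z‖ ^ 2 ∂μ = 1 := by
    exact_mod_cast (polyInner_self μ (φ n)).symm.trans ((hφon n n).trans (if_pos rfl))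
  rw [← hk, ← integral_const_mul]
  calc ∫ z, Metric.infDist z₀ S ^ 2 * ‖(kernelPoly φ n z₀).eval z‖ ^ 2 ∂μ
      ≤ ∫ z, 4 * ‖(φ n).eval z₀‖ ^ 2 * ‖(φ n).eval z‖ ^ 2 ∂μ := by
        refine integral_mono_ae (integrable_of_continuous_of_ae_norm_eq_one hcirc (by fun_prop))
          (integrable_of_continuous_of_ae_norm_eq_one hcirc (by fun_prop)) ?_
        filter_upwards [hcirc, hS] with z hz hzS
        exact infDist_sq_mul_norm_sq_eval_kernelPoly_le hφon hcirc hφdeg hz₀ hz hzS n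
    _ = 4 * ‖(φ n).eval z₀‖ ^ 2 := by rw [integral_const_mul, hφn, mul_one]

end Orthonormal

lemma ae_mem_msupport (μ : Measure ℂ) : ∀ᵐ z ∂μ, z ∈ msupport μ := by
  refine measure_null_of_locally_null _ fun x hx => ?_
  simp only [msupport, Set.mem_compl_iff, Set.mem_ofPred_eq, not_forall, not_not] at hx
  obtain ⟨ε, hε, h0⟩ := hx
  exact ⟨Metric.ball x ε, mem_nhdsWithin_of_mem_nhds (Metric.ball_mem_nhds x hε), h0⟩

lemma sum_norm_sq_eval_pos {φ : ℕ → ℂ[X]} (h0 : (φ 0).natDegree = 0) (hne : φ 0 ≠ 0)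
    {n : ℕ} (hn : 1 ≤ n) (z : ℂ) : 0 < ∑ j ∈ range n, ‖(φ j).eval z‖ ^ 2 := by
  have hφ0 : (φ 0).eval z ≠ 0 := by
    rw [eq_C_of_natDegree_eq_zero h0, eval_C]
    simpa [leadingCoeff, h0] using leadingCoeff_ne_zero.2 hne
  exact (by positivity : 0 < ‖(φ 0).eval z‖ ^ 2).trans_le
    (single_le_sum (f := fun j => ‖(φ j).eval z‖ ^ 2) (fun _ _ => by positivity)
      (mem_range.2 hn))

theorem hn_lower_bound_at_z0_general
    (μ : Measure ℂ) [IsProbabilityMeasure μ]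
    (hcirc : ∀ᵐ z ∂μ, Norm.norm z = 1)
    (φ : ℕ → Polynomial ℂ)
    (hφdeg : ∀ j, (φ j).natDegree = j)
    (hφon : ∀ i j, ∫ z, (φ i).eval z * (starRingEnd ℂ) ((φ j).eval z) ∂μ
      = if i = j then 1 else 0)
    (lam : ℂ) (hlam : Norm.norm lam = 1)
    (z₀ : ℂ) (hz₀ : Norm.norm z₀ = 1)
    (n : ℕ) (hn : 1 ≤ n)
    (hcomp :
      Norm.norm ((1 - (starRingEnd ℂ) lam * z₀)
          * ∑ j ∈ Finset.range (n + 1), (φ j).eval z₀ * (starRingEnd ℂ) ((φ j).eval lam))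
        ≤ Norm.norm ((1 - (starRingEnd ℂ) lam * z₀)
          * ∑ j ∈ Finset.range n, (φ j).eval z₀ * (starRingEnd ℂ) ((φ j).eval lam))) :
    (1 / 4) * Norm.norm ((φ n).eval lam) * Norm.norm (z₀ - lam)
        * Metric.infDist z₀ (msupport μ)
      ≤ Norm.norm ((1 - (starRingEnd ℂ) lam * z₀)
            * ∑ j ∈ Finset.range n, (φ j).eval z₀ * (starRingEnd ℂ) ((φ j).eval lam))
        / Real.sqrt (∑ j ∈ Finset.range n, Norm.norm ((φ j).eval z₀) ^ 2) := by
  set hnz₀ := (1 - conj lam * z₀) * ∑ j ∈ range n, (φ j).eval z₀ * conj ((φ j).eval lam)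
  set K := ∑ j ∈ range n, ‖(φ j).eval z₀‖ ^ 2
  set a := ‖(φ n).eval z₀‖
  set δ := Metric.infDist z₀ (msupport μ)
  have hK : 0 < K := sum_norm_sq_eval_pos (hφdeg 0) (ne_zero_of_orthonormal hφon 0) hn z₀
  have hδK : δ * √K ≤ 2 * a := by
    refine (pow_le_pow_iff_left₀ (mul_nonneg Metric.infDist_nonneg (Real.sqrt_nonneg K))
      (by positivity) two_ne_zero).1 ?_
    rw [mul_pow, mul_pow, Real.sq_sqrt hK.le]
    linarith [infDist_sq_mul_sum_norm_sq_le hφon hcirc hφdeg (ae_mem_msupport μ) hz₀ n]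
  have hstep : ‖z₀ - lam‖ * (a * ‖(φ n).eval lam‖) ≤ 2 * ‖hnz₀‖ := by
    rw [sum_range_succ, mul_add] at hcomp
    have := norm_sub_le (hnz₀ + (1 - conj lam * z₀) * ((φ n).eval z₀ * conj ((φ n).eval lam)))
      hnz₀
    rw [add_sub_cancel_left, norm_mul, norm_mul, Complex.norm_conj,
      norm_one_sub_conj_mul hlam] at this
    linarith
  rw [le_div_iff₀ (Real.sqrt_pos.2 hK)]
  nlinarith [mul_le_mul_of_nonneg_left hδK
    (mul_nonneg (norm_nonneg ((φ n).eval lam)) (norm_nonneg (z₀ - lam)))]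

/-- Lemma 1: if `z₀ ∈ ∂𝔻`, `δ = dist(z₀, supp μ) > 0`, `lam ∈ ∂𝔻`, `z₀ ≠ lam`, and
`|h_{n+1}(z₀)| ≤ |h_n(z₀)|`, then
`|h_n(z₀)| / K_{n-1}(z₀,z₀)^{1/2} ≥ (1/4)|φ_n(lam)| |z₀ - lam| δ`,
where `h_m(z) = (1 - conj(lam) z) K_{m-1}(z, lam)`. -/
theorem hn_lower_bound_at_z0
    (μ : Measure ℂ) [IsProbabilityMeasure μ]
    (hcirc : ∀ᵐ z ∂μ, Norm.norm z = 1)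
    (hinf : (msupport μ).Infinite)
    (φ : ℕ → Polynomial ℂ)
    (hφdeg : ∀ j, (φ j).natDegree = j)
    (hφon : ∀ i j, ∫ z, (φ i).eval z * (starRingEnd ℂ) ((φ j).eval z) ∂μ
      = if i = j then 1 else 0)
    (lam : ℂ) (hlam : Norm.norm lam = 1)
    (z₀ : ℂ) (hz₀ : Norm.norm z₀ = 1) (hz₀lam : z₀ ≠ lam)
    (hδ : 0 < Metric.infDist z₀ (msupport μ))
    (n : ℕ) (hn : 1 ≤ n)
    (hcomp :
      Norm.norm ((1 - (starRingEnd ℂ) lam * z₀)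
          * ∑ j ∈ Finset.range (n + 1), (φ j).eval z₀ * (starRingEnd ℂ) ((φ j).eval lam))
        ≤ Norm.norm ((1 - (starRingEnd ℂ) lam * z₀)
          * ∑ j ∈ Finset.range n, (φ j).eval z₀ * (starRingEnd ℂ) ((φ j).eval lam))) :
    (1 / 4) * Norm.norm ((φ n).eval lam) * Norm.norm (z₀ - lam)
        * Metric.infDist z₀ (msupport μ)
      ≤ Norm.norm ((1 - (starRingEnd ℂ) lam * z₀)
            * ∑ j ∈ Finset.range n, (φ j).eval z₀ * (starRingEnd ℂ) ((φ j).eval lam))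
        / Real.sqrt (∑ j ∈ Finset.range n, Norm.norm ((φ j).eval z₀) ^ 2) :=
  hn_lower_bound_at_z0_general μ hcirc φ hφdeg hφon lam hlam z₀ hz₀ n hn hcomp
end

section
/- For z on the unit circle, conj(ψ_n(z))·φ_n(z) + conj(φ_n(z))·ψ_n(z) = 2, where φ_n and ψ_n are the first and second kind orthonormal polynomials. -/
open MeasureTheory Polynomial

/-!
On the unit circle the reversed polynomial evaluates as `p^*(z) = z ^ n * conj (p z)`, so the
Szegő recursions read `ρ φ_{n+1} = z φ_n - conj α φ_n^*` and `ρ ψ_{n+1} = z ψ_n + conj α ψ_n^*`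
with `ρ ^ 2 = 1 - ‖α‖ ^ 2`. Expanding `conj ψ_{n+1} φ_{n+1} + conj φ_{n+1} ψ_{n+1}`, the cross
terms cancel because the two recursions carry opposite signs of `α`, and what remains is
`(1 - ‖α‖ ^ 2) / ρ ^ 2 = 1` times the same expression at level `n`; at level `0` it is `2`.
-/

open ComplexConjugate

theorem eval_reflect_map_conj_of_norm_eq_one {p : ℂ[X]} {n : ℕ} (hp : p.natDegree ≤ n)
    {z : ℂ} (hz : ‖z‖ = 1) :
    (reflect n (p.map (starRingEnd ℂ))).eval z = z ^ n * conj (p.eval z) := by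
  have hz0 : z ≠ 0 := norm_ne_zero_iff.mp (by rw [hz]; exact one_ne_zero)
  let _ : Invertible z⁻¹ := invertibleOfNonzero (inv_ne_zero hz0)
  have key := eval₂_reflect_mul_pow (RingHom.id ℂ) z⁻¹ n (p.map (starRingEnd ℂ))
    (natDegree_map_le.trans hp)
  have hmap : (p.map (starRingEnd ℂ)).eval z⁻¹ = conj (p.eval z) := by
    rw [Complex.inv_eq_conj hz, eval_map, eval₂_at_apply]
  rw [invOf_eq_inv, inv_inv] at key
  change (reflect n (p.map (starRingEnd ℂ))).eval z * z⁻¹ ^ n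
    = (p.map (starRingEnd ℂ)).eval z⁻¹ at key
  rw [hmap, inv_pow, ← div_eq_mul_inv, div_eq_iff (pow_ne_zero n hz0)] at key
  rw [key, mul_comm]

theorem eval_of_szego_recursion {p q : ℂ[X]} {n : ℕ} (hp : p.natDegree ≤ n) {ρ c : ℂ}
    (hrec : C ρ * q = X * p - C c * reflect n (p.map (starRingEnd ℂ))) {z : ℂ} (hz : ‖z‖ = 1) :
    ρ * q.eval z = z * p.eval z - c * (z ^ n * conj (p.eval z)) := by
  simpa [eval_reflect_map_conj_of_norm_eq_one hp hz] using congrArg (eval z) hrec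

theorem szego_step_conj_mul_add_conj_mul {z : ℂ} (hz : ‖z‖ = 1) (n : ℕ) (A a b : ℂ) :
    conj (z * b + conj A * (z ^ n * conj b)) * (z * a - conj A * (z ^ n * conj a))
      + conj (z * a - conj A * (z ^ n * conj a)) * (z * b + conj A * (z ^ n * conj b))
      = (1 - ‖A‖ ^ 2) * (conj b * a + conj a * b) := by
  have hz' : conj z * z = 1 := by
    rw [Complex.conj_mul', hz, Complex.ofReal_one, one_pow]
  have hzn : conj z ^ n * z ^ n = 1 := by rw [← mul_pow, hz', one_pow]
  have hA : (‖A‖ : ℂ) ^ 2 = A * conj A := (Complex.mul_conj' A).symm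
  simp only [map_add, map_sub, map_mul, map_pow, Complex.conj_conj]
  linear_combination (conj b * a + conj a * b) * (hz' - A * conj A * hzn + hA)

theorem mixed_identity_on_circle_general
    (φ ψ : ℕ → Polynomial ℂ)
    (hφdeg : ∀ j, (φ j).natDegree = j) (hψdeg : ∀ j, (ψ j).natDegree = j)
    (α : ℕ → ℂ) (hα : ∀ j, ‖α j‖ < 1)
    (hφ0 : φ 0 = 1) (hψ0 : ψ 0 = 1)
    (hφrec : ∀ j, C (Real.sqrt (1 - ‖α j‖ ^ 2) : ℂ) * φ (j + 1)
      = X * φ j - C ((starRingEnd ℂ) (α j)) * reflect j ((φ j).map (starRingEnd ℂ)))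
    (hψrec : ∀ j, C (Real.sqrt (1 - ‖α j‖ ^ 2) : ℂ) * ψ (j + 1)
      = X * ψ j - C ((starRingEnd ℂ) (-α j)) * reflect j ((ψ j).map (starRingEnd ℂ)))
    (n : ℕ) :
    ∀ z : ℂ, ‖z‖ = 1 →
      (starRingEnd ℂ) ((ψ n).eval z) * (φ n).eval z
        + (starRingEnd ℂ) ((φ n).eval z) * (ψ n).eval z = 2 := by
  induction n with
  | zero => simp [hφ0, hψ0, one_add_one_eq_two]
  | succ n ih =>
    intro z hz
    set ρ : ℝ := Real.sqrt (1 - ‖α n‖ ^ 2)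
    have hα_sq : ‖α n‖ ^ 2 < 1 := pow_lt_one₀ (norm_nonneg _) (hα n) two_ne_zero
    have hρ_sq : (ρ : ℂ) ^ 2 = 1 - ‖α n‖ ^ 2 := by
      exact_mod_cast Real.sq_sqrt (sub_nonneg.mpr hα_sq.le)
    have hρ_ne : (ρ : ℂ) ^ 2 ≠ 0 := by
      rw [hρ_sq, sub_ne_zero]
      exact_mod_cast hα_sq.ne'
    have hφ := eval_of_szego_recursion (hφdeg n).le (hφrec n) hz
    have hψ := eval_of_szego_recursion (hψdeg n).le (hψrec n) hz
    rw [map_neg, neg_mul, sub_neg_eq_add] at hψ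
    refine mul_left_cancel₀ hρ_ne ?_
    calc (ρ : ℂ) ^ 2 * (conj ((ψ (n + 1)).eval z) * (φ (n + 1)).eval z
            + conj ((φ (n + 1)).eval z) * (ψ (n + 1)).eval z)
        = conj (ρ * (ψ (n + 1)).eval z) * (ρ * (φ (n + 1)).eval z)
            + conj (ρ * (φ (n + 1)).eval z) * (ρ * (ψ (n + 1)).eval z) := by
          simp only [map_mul, Complex.conj_ofReal]; ring
      _ = (1 - ‖α n‖ ^ 2) * (conj ((ψ n).eval z) * (φ n).eval z
            + conj ((φ n).eval z) * (ψ n).eval z) := by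
          rw [hφ, hψ]; exact szego_step_conj_mul_add_conj_mul hz n (α n) _ _
      _ = (ρ : ℂ) ^ 2 * 2 := by rw [ih z hz, hρ_sq]

/-- For `z` on the unit circle, `conj(ψ_n(z))φ_n(z) + conj(φ_n(z))ψ_n(z) = 2`, where
`φ_n` and `ψ_n` are the first and second kind orthonormal polynomials (the Verblunsky
coefficients of `ψ` being the negatives of those of `φ`, with `φ_0 = ψ_0 = 1`). -/
theorem mixed_identity_on_circle
    (μ ν : Measure ℂ) [IsProbabilityMeasure μ] [IsProbabilityMeasure ν]
    (hμc : ∀ᵐ z ∂μ, ‖z‖ = 1) (hνc : ∀ᵐ z ∂ν, ‖z‖ = 1)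
    (hμinf : (msupport μ).Infinite) (hνinf : (msupport ν).Infinite)
    (φ ψ : ℕ → Polynomial ℂ)
    (hφdeg : ∀ j, (φ j).natDegree = j) (hψdeg : ∀ j, (ψ j).natDegree = j)
    (hφon : ∀ i j, ∫ z, (φ i).eval z * (starRingEnd ℂ) ((φ j).eval z) ∂μ
      = if i = j then 1 else 0)
    (hψon : ∀ i j, ∫ z, (ψ i).eval z * (starRingEnd ℂ) ((ψ j).eval z) ∂ν
      = if i = j then 1 else 0)
    (α : ℕ → ℂ) (hα : ∀ j, ‖α j‖ < 1)
    (hφ0 : φ 0 = 1) (hψ0 : ψ 0 = 1)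
    (hφrec : ∀ j, C (Real.sqrt (1 - ‖α j‖ ^ 2) : ℂ) * φ (j + 1)
      = X * φ j - C ((starRingEnd ℂ) (α j)) * reflect j ((φ j).map (starRingEnd ℂ)))
    (hψrec : ∀ j, C (Real.sqrt (1 - ‖α j‖ ^ 2) : ℂ) * ψ (j + 1)
      = X * ψ j - C ((starRingEnd ℂ) (-α j)) * reflect j ((ψ j).map (starRingEnd ℂ)))
    (n : ℕ) :
    ∀ z : ℂ, ‖z‖ = 1 →
      (starRingEnd ℂ) ((ψ n).eval z) * (φ n).eval z
        + (starRingEnd ℂ) ((φ n).eval z) * (ψ n).eval z = 2 :=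
  mixed_identity_on_circle_general φ ψ hφdeg hψdeg α hα hφ0 hψ0 hφrec hψrec n
end

section
/- Fix λ ∈ ∂𝔻 and define s_n(z) = conj(φ*_{n-1}(λ))ψ*_{n-1}(z) + z conj(λ) conj(φ_{n-1}(λ))ψ_{n-1}(z). Then s_{n+1}(z) − s_n(z) = −(1 − conj(λ)z)·conj(φ_n(λ))·ψ_n(z), and this is nonzero for every z ∈ ∂𝔻 with z ≠ λ. -/
/-!
Write `p*` for `reflect n (p.map conj)`. Evaluating the Szegő recurrences of `φ` (coefficients `α`)
at `λ` and of `ψ` (coefficients `-α`) at `z`, together with their reversed forms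
`ρ φ*_{n+1} = φ*_n - α z φ_n`, and using `ρ² = 1 - |α|²`, gives the mixed Christoffel–Darboux step
`conj φ*_n(λ) ψ*_n(z) + conj φ_n(λ) ψ_n(z) = s_n(z)`. Subtracting it from `s_{n+1}(z)` leaves
`-(1 - conj λ z) conj φ_n(λ) ψ_n(z)`.

For non-vanishing: on the unit circle `|p*(z)| = |p(z)|`, so the reversed recurrence yields
`|ρ φ*_{n+1}(z)| ≥ (1 - |α_n|) |φ_n(z)|`, and by induction neither `φ_n` nor `ψ_n` vanishes on `∂𝔻`;
finally `1 - conj λ z ≠ 0` for `z ≠ λ` on the circle.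
-/

open MeasureTheory Polynomial

open ComplexConjugate

namespace Polynomial

theorem eval_reflect_of_ne_zero {K : Type*} [Field K] {p : K[X]} {N : ℕ} (hp : p.natDegree ≤ N)
    {z : K} (hz : z ≠ 0) : (reflect N p).eval z = z ^ N * p.eval z⁻¹ := by
  let _ : Invertible z⁻¹ := invertibleOfNonzero (inv_ne_zero hz)
  have h := eval₂_reflect_mul_pow (RingHom.id K) z⁻¹ N p hp
  rw [invOf_eq_inv, inv_inv, ← eval, ← eval] at h
  rw [← h, inv_pow, mul_comm, inv_mul_cancel_right₀ (pow_ne_zero N hz)]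

theorem reflect_succ_reflect {R : Type*} [Semiring R] {p : R[X]} {N : ℕ} (hp : p.natDegree ≤ N) :
    reflect (N + 1) (reflect N p) = p * X := by
  have hp' : (reflect N p).natDegree ≤ N := natDegree_reflect_le.trans (max_le le_rfl hp)
  rw [← mul_one (reflect N p), reflect_mul _ _ (G := 1) hp' (natDegree_one.trans_le zero_le_one),
    reflect_reflect, reflect_one, pow_one]

end Polynomial

theorem Complex.eval_reflect_map_conj {p : ℂ[X]} {N : ℕ} (hp : p.natDegree ≤ N) {z : ℂ}
    (hz : ‖z‖ = 1) : (reflect N (p.map conj)).eval z = z ^ N * conj (p.eval z) := by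
  have hz0 : z ≠ 0 := norm_ne_zero_iff.mp (by rw [hz]; exact one_ne_zero)
  rw [eval_reflect_of_ne_zero ((natDegree_map _).trans_le hp) hz0, Complex.inv_eq_conj hz,
    eval_map, eval₂_hom]

theorem Complex.norm_eval_reflect_map_conj {p : ℂ[X]} {N : ℕ} (hp : p.natDegree ≤ N) {z : ℂ}
    (hz : ‖z‖ = 1) : ‖(reflect N (p.map conj)).eval z‖ = ‖p.eval z‖ := by
  rw [Complex.eval_reflect_map_conj hp hz, norm_mul, norm_pow, hz, one_pow, one_mul,
    Complex.norm_conj]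

section SzegoStep

variable {p q : ℂ[X]} {j : ℕ} {a : ℂ} {ρ : ℝ}

theorem szego_step_reflect (hp : p.natDegree ≤ j)
    (h : C (ρ : ℂ) * q = X * p - C (conj a) * reflect j (p.map conj)) :
    C (ρ : ℂ) * reflect (j + 1) (q.map conj) = reflect j (p.map conj) - C a * (X * p) := by
  have hX : reflect (j + 1) (X * p.map conj) = reflect j (p.map conj) := by
    rw [add_comm, reflect_mul _ _ natDegree_X_le ((natDegree_map _).trans_le hp), reflect_one_X,
      one_mul]
  have hconj : (starRingEnd ℂ).comp (starRingEnd ℂ) = RingHom.id ℂ :=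
    RingHom.ext Complex.conj_conj
  have hstar : reflect (j + 1) ((reflect j (p.map conj)).map conj) = p * X := by
    rw [← reflect_map, Polynomial.map_map, hconj, Polynomial.map_id, reflect_succ_reflect hp]
  have h' := congrArg (fun r => reflect (j + 1) (r.map conj)) h
  simp only [Polynomial.map_mul, Polynomial.map_sub, map_C, Polynomial.map_X, Complex.conj_ofReal,
    Complex.conj_conj, reflect_sub, reflect_C_mul, hX, hstar] at h'
  linear_combination h'

theorem eval_szego_step_reflect (hp : p.natDegree ≤ j)
    (h : C (ρ : ℂ) * q = X * p - C (conj a) * reflect j (p.map conj)) (z : ℂ) :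
    ρ * (reflect (j + 1) (q.map conj)).eval z
      = (reflect j (p.map conj)).eval z - a * z * p.eval z := by
  simpa [mul_assoc] using congrArg (eval z) (szego_step_reflect hp h)

theorem eval_ne_zero_of_szego_step (ha : ‖a‖ < 1) (hp : p.natDegree ≤ j)
    (hq : q.natDegree ≤ j + 1)
    (h : C (ρ : ℂ) * q = X * p - C (conj a) * reflect j (p.map conj)) {z : ℂ} (hz : ‖z‖ = 1)
    (hpz : p.eval z ≠ 0) : q.eval z ≠ 0 := by
  rw [← norm_ne_zero_iff, ← Complex.norm_eval_reflect_map_conj hq hz]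
  have hlow : (1 - ‖a‖) * ‖p.eval z‖ ≤ ‖(ρ : ℂ)‖ * ‖(reflect (j + 1) (q.map conj)).eval z‖ :=
    calc (1 - ‖a‖) * ‖p.eval z‖
        = ‖(reflect j (p.map conj)).eval z‖ - ‖a * z * p.eval z‖ := by
          rw [Complex.norm_eval_reflect_map_conj hp hz, norm_mul, norm_mul, hz]; ring
      _ ≤ ‖(reflect j (p.map conj)).eval z - a * z * p.eval z‖ := norm_sub_norm_le _ _
      _ = ‖(ρ : ℂ)‖ * ‖(reflect (j + 1) (q.map conj)).eval z‖ := by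
          rw [← eval_szego_step_reflect hp h, norm_mul]
  intro h0
  rw [h0, mul_zero] at hlow
  exact hlow.not_gt (mul_pos (sub_pos.mpr ha) (norm_pos_iff.mpr hpz))

theorem mixed_christoffel_darboux_step {p' q' : ℂ[X]} (hρ : ρ ≠ 0) (hρa : ρ ^ 2 = 1 - ‖a‖ ^ 2)
    (hp : p.natDegree ≤ j) (hq : q.natDegree ≤ j)
    (hp' : C (ρ : ℂ) * p' = X * p - C (conj a) * reflect j (p.map conj))
    (hq' : C (ρ : ℂ) * q' = X * q - C (conj (-a)) * reflect j (q.map conj)) (y z : ℂ) :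
    conj ((reflect (j + 1) (p'.map conj)).eval y) * (reflect (j + 1) (q'.map conj)).eval z
        + conj (p'.eval y) * q'.eval z
      = conj ((reflect j (p.map conj)).eval y) * (reflect j (q.map conj)).eval z
        + z * conj y * conj (p.eval y) * q.eval z := by
  have e1 := congrArg (fun r => conj (r.eval y)) hp'
  have e2 := congrArg conj (eval_szego_step_reflect hp hp' y)
  have e3 := congrArg (eval z) hq'
  have e4 := eval_szego_step_reflect hq hq' z
  simp only [eval_mul, eval_sub, eval_neg, eval_C, eval_X, map_mul, map_sub, map_neg,
    Complex.conj_ofReal, Complex.conj_conj] at e1 e2 e3 e4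
  set P := p.eval y
  set Ps := (reflect j (p.map conj)).eval y
  set Q := q.eval z
  set Qs := (reflect j (q.map conj)).eval z
  have hρc : (ρ : ℂ) ^ 2 = 1 - conj a * a := by
    rw [Complex.conj_mul', ← Complex.ofReal_pow, hρa]; push_cast; ring
  apply mul_left_cancel₀ (pow_ne_zero 2 (Complex.ofReal_ne_zero.mpr hρ))
  linear_combination (ρ * (reflect (j + 1) (q'.map conj)).eval z) * e2
    + (conj Ps - conj a * conj y * conj P) * e4 + (ρ * q'.eval z) * e1
    + (conj y * conj P - a * conj Ps) * e3 - (conj Ps * Qs + z * conj y * conj P * Q) * hρc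

end SzegoStep

theorem eval_ne_zero_of_szego {φ : ℕ → ℂ[X]} {α : ℕ → ℂ} {ρ : ℕ → ℝ} (hα : ∀ j, ‖α j‖ < 1)
    (hφ0 : φ 0 = 1) (hdeg : ∀ j, (φ j).natDegree ≤ j)
    (hrec : ∀ j, C (ρ j : ℂ) * φ (j + 1) = X * φ j - C (conj (α j)) * reflect j ((φ j).map conj))
    {z : ℂ} (hz : ‖z‖ = 1) : ∀ n, (φ n).eval z ≠ 0
  | 0 => by simp [hφ0]
  | n + 1 => eval_ne_zero_of_szego_step (hα n) (hdeg n) (hdeg (n + 1)) (hrec n) hz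
      (eval_ne_zero_of_szego hα hφ0 hdeg hrec hz n)

theorem Complex.one_sub_conj_mul_ne_zero {y z : ℂ} (hy : ‖y‖ = 1) (hzy : z ≠ y) :
    1 - conj y * z ≠ 0 := by
  have hyy : conj y * y = 1 := by rw [Complex.conj_mul', hy]; norm_num
  intro h
  exact hzy (by linear_combination -y * h - z * hyy)

theorem sn_difference_nonzero_general
    (φ ψ : ℕ → Polynomial ℂ)
    (hφdeg : ∀ j, (φ j).natDegree = j) (hψdeg : ∀ j, (ψ j).natDegree = j)
    (α : ℕ → ℂ) (hα : ∀ j, ‖α j‖ < 1)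
    (hφ0 : φ 0 = 1) (hψ0 : ψ 0 = 1)
    (hφrec : ∀ j, C (Real.sqrt (1 - ‖α j‖ ^ 2) : ℂ) * φ (j + 1)
      = X * φ j - C ((starRingEnd ℂ) (α j)) * reflect j ((φ j).map (starRingEnd ℂ)))
    (hψrec : ∀ j, C (Real.sqrt (1 - ‖α j‖ ^ 2) : ℂ) * ψ (j + 1)
      = X * ψ j - C ((starRingEnd ℂ) (-α j)) * reflect j ((ψ j).map (starRingEnd ℂ)))
    (lam : ℂ) (hlam : ‖lam‖ = 1)
    (n : ℕ) (hn : 1 ≤ n) :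
    (∀ z : ℂ,
      ((starRingEnd ℂ) ((reflect n ((φ n).map (starRingEnd ℂ))).eval lam)
          * (reflect n ((ψ n).map (starRingEnd ℂ))).eval z
        + z * (starRingEnd ℂ) lam * (starRingEnd ℂ) ((φ n).eval lam) * (ψ n).eval z)
      - ((starRingEnd ℂ) ((reflect (n - 1) ((φ (n - 1)).map (starRingEnd ℂ))).eval lam)
          * (reflect (n - 1) ((ψ (n - 1)).map (starRingEnd ℂ))).eval z
        + z * (starRingEnd ℂ) lam * (starRingEnd ℂ) ((φ (n - 1)).eval lam)
          * (ψ (n - 1)).eval z)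
      = -(1 - (starRingEnd ℂ) lam * z) * (starRingEnd ℂ) ((φ n).eval lam) * (ψ n).eval z) ∧
    (∀ z : ℂ, ‖z‖ = 1 → z ≠ lam →
      -(1 - (starRingEnd ℂ) lam * z) * (starRingEnd ℂ) ((φ n).eval lam) * (ψ n).eval z
        ≠ 0) := by
  obtain ⟨m, rfl⟩ : ∃ m, n = m + 1 := ⟨n - 1, (Nat.succ_pred_eq_of_pos hn).symm⟩
  rw [Nat.add_sub_cancel]
  have hgap : 0 < 1 - ‖α m‖ ^ 2 := by nlinarith [hα m, norm_nonneg (α m)]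
  refine ⟨fun z => ?_, fun z hz hzlam => ?_⟩
  · have hcd := mixed_christoffel_darboux_step (Real.sqrt_pos.mpr hgap).ne'
      (Real.sq_sqrt hgap.le) (hφdeg m).le (hψdeg m).le (hφrec m) (hψrec m) lam z
    linear_combination hcd
  · have hφne := eval_ne_zero_of_szego hα hφ0 (fun j => (hφdeg j).le) hφrec hlam (m + 1)
    have hψne := eval_ne_zero_of_szego (α := fun j => -α j) (fun j => by simpa using hα j) hψ0
      (fun j => (hψdeg j).le) hψrec hz (m + 1)
    exact mul_ne_zero (mul_ne_zero (neg_ne_zero.mpr (Complex.one_sub_conj_mul_ne_zero hlam hzlam))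
      ((_root_.map_ne_zero _).mpr hφne)) hψne

/-- With `s_m(z) = conj(φ*_{m-1}(lam))ψ*_{m-1}(z) + z conj(lam) conj(φ_{m-1}(lam))ψ_{m-1}(z)`
(for `m ≥ 1`), one has `s_{n+1}(z) - s_n(z) = -(1 - conj(lam)z) conj(φ_n(lam)) ψ_n(z)`,
which is nonzero for every `z ∈ ∂𝔻` with `z ≠ lam`. -/
theorem sn_difference_nonzero
    (μ ν : Measure ℂ) [IsProbabilityMeasure μ] [IsProbabilityMeasure ν]
    (hμc : ∀ᵐ z ∂μ, ‖z‖ = 1) (hνc : ∀ᵐ z ∂ν, ‖z‖ = 1)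
    (hμinf : (msupport μ).Infinite) (hνinf : (msupport ν).Infinite)
    (φ ψ : ℕ → Polynomial ℂ)
    (hφdeg : ∀ j, (φ j).natDegree = j) (hψdeg : ∀ j, (ψ j).natDegree = j)
    (hφon : ∀ i j, ∫ z, (φ i).eval z * (starRingEnd ℂ) ((φ j).eval z) ∂μ
      = if i = j then 1 else 0)
    (hψon : ∀ i j, ∫ z, (ψ i).eval z * (starRingEnd ℂ) ((ψ j).eval z) ∂ν
      = if i = j then 1 else 0)
    (α : ℕ → ℂ) (hα : ∀ j, ‖α j‖ < 1)
    (hφ0 : φ 0 = 1) (hψ0 : ψ 0 = 1)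
    (hφrec : ∀ j, C (Real.sqrt (1 - ‖α j‖ ^ 2) : ℂ) * φ (j + 1)
      = X * φ j - C ((starRingEnd ℂ) (α j)) * reflect j ((φ j).map (starRingEnd ℂ)))
    (hψrec : ∀ j, C (Real.sqrt (1 - ‖α j‖ ^ 2) : ℂ) * ψ (j + 1)
      = X * ψ j - C ((starRingEnd ℂ) (-α j)) * reflect j ((ψ j).map (starRingEnd ℂ)))
    (lam : ℂ) (hlam : ‖lam‖ = 1)
    (n : ℕ) (hn : 1 ≤ n) :
    (∀ z : ℂ,
      ((starRingEnd ℂ) ((reflect n ((φ n).map (starRingEnd ℂ))).eval lam)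
          * (reflect n ((ψ n).map (starRingEnd ℂ))).eval z
        + z * (starRingEnd ℂ) lam * (starRingEnd ℂ) ((φ n).eval lam) * (ψ n).eval z)
      - ((starRingEnd ℂ) ((reflect (n - 1) ((φ (n - 1)).map (starRingEnd ℂ))).eval lam)
          * (reflect (n - 1) ((ψ (n - 1)).map (starRingEnd ℂ))).eval z
        + z * (starRingEnd ℂ) lam * (starRingEnd ℂ) ((φ (n - 1)).eval lam)
          * (ψ (n - 1)).eval z)
      = -(1 - (starRingEnd ℂ) lam * z) * (starRingEnd ℂ) ((φ n).eval lam) * (ψ n).eval z) ∧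
    (∀ z : ℂ, ‖z‖ = 1 → z ≠ lam →
      -(1 - (starRingEnd ℂ) lam * z) * (starRingEnd ℂ) ((φ n).eval lam) * (ψ n).eval z
        ≠ 0) :=
  sn_difference_nonzero_general φ ψ hφdeg hψdeg α hα hφ0 hψ0 hφrec hψrec lam hlam n hn
end
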